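/- Let x = (x1,...,x6) ∈ ℝ⁶ with all coordinates positive and x1 > 1, and let φ(x) = (x3·x4 + x2·x5 + x1·x2·x3 + x1·x4·x5 + x6 − x1²·x6) / (√(x1² + x3² + x5² + 2·x1·x3·x5 − 1) · √(x2² + x4² + 2·x1·x2·x4)). Then at least one of the following holds at x: (i) ∂φ/∂x2 > 0 and ∂φ/∂x3 > 0; (ii) ∂φ/∂x4 > 0 and ∂φ/∂x5 > 0. -/

import Mathlib

/-!
In each variable `x2, …, x5` the function `φ` has the shape `(a t + b) / (c √(t² + 2 e t + f))`,
whose derivative has the sign of `a (e t + f) - b (t + e)`. For `x2` this quantity is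
`(x1² - 1) (x4 (x2 x3 - x4 x5) + x6 (x2 + x1 x4))` and for `x3` it is
`(x1² - 1) (x4 (1 - x5²) + x2 (x1 + x3 x5) + x6 (x3 + x1 x5))`; both are positive when
`x4 x5 ≤ x2 x3`. Since `φ` is invariant under `(x2, x3) ↔ (x4, x5)`, the case `x2 x3 ≤ x4 x5`
gives the positivity of the derivatives in `x4` and `x5`.
-/

/-- The cosine of the dihedral angle at the hyper-ideal edge e23 of a decorated
3-1 type hyperbolic tetrahedron. -/
noncomputable def phi (x1 x2 x3 x4 x5 x6 : ℝ) : ℝ :=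
  (x3 * x4 + x2 * x5 + x1 * x2 * x3 + x1 * x4 * x5 + x6 - x1 ^ 2 * x6) /
    (Real.sqrt (x1 ^ 2 + x3 ^ 2 + x5 ^ 2 + 2 * x1 * x3 * x5 - 1) *
      Real.sqrt (x2 ^ 2 + x4 ^ 2 + 2 * x1 * x2 * x4))

theorem hasDerivAt_linear_div_mul_sqrt_quadratic {a b c e f x : ℝ} (hc : c ≠ 0)
    (hq : 0 < x ^ 2 + 2 * e * x + f) :
    HasDerivAt (fun t => (a * t + b) / (c * √(t ^ 2 + 2 * e * t + f)))
      ((a * (e * x + f) - b * (x + e)) /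
        (c * ((x ^ 2 + 2 * e * x + f) * √(x ^ 2 + 2 * e * x + f)))) x := by
  have hquad : HasDerivAt (fun t => t ^ 2 + 2 * e * t + f) (2 * x + 2 * e) x := by
    simpa using (((hasDerivAt_pow 2 x).add ((hasDerivAt_id x).const_mul (2 * e))).add_const f)
  have hnum : HasDerivAt (fun t => a * t + b) a x := by
    simpa using ((hasDerivAt_id x).const_mul a).add_const b
  have hs : 0 < √(x ^ 2 + 2 * e * x + f) := Real.sqrt_pos.mpr hq
  refine (hnum.div ((hquad.sqrt hq.ne').const_mul c) (mul_ne_zero hc hs.ne')).congr_deriv ?_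
  have hsq := Real.sq_sqrt hq.le
  set s := √(x ^ 2 + 2 * e * x + f)
  rw [← hsq]
  field_simp
  linear_combination a * hsq

theorem deriv_linear_div_mul_sqrt_quadratic_pos {a b c e f x : ℝ} (hc : 0 < c)
    (hq : 0 < x ^ 2 + 2 * e * x + f) (hnum : 0 < a * (e * x + f) - b * (x + e)) :
    0 < deriv (fun t => (a * t + b) / (c * √(t ^ 2 + 2 * e * t + f))) x := by
  rw [(hasDerivAt_linear_div_mul_sqrt_quadratic hc.ne' hq).deriv]
  have := Real.sqrt_pos.mpr hq
  positivity

theorem phi_swap (x1 x2 x3 x4 x5 x6 : ℝ) :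
    phi x1 x2 x3 x4 x5 x6 = phi x1 x4 x5 x2 x3 x6 := by
  unfold phi
  ring_nf

theorem deriv_phi_x2_pos {x1 x2 x3 x4 x5 x6 : ℝ} (hx1 : 1 < x1) (h2 : 0 < x2) (h3 : 0 < x3)
    (h4 : 0 < x4) (h5 : 0 < x5) (h6 : 0 < x6) (h : x4 * x5 ≤ x2 * x3) :
    0 < deriv (fun t => phi x1 t x3 x4 x5 x6) x2 := by
  have h1 : 0 < x1 := by linarith
  have hx1sq : 0 < x1 ^ 2 - 1 := by nlinarith
  have hslice : (fun t => phi x1 t x3 x4 x5 x6) = fun t =>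
      ((x5 + x1 * x3) * t + (x3 * x4 + x1 * x4 * x5 + x6 - x1 ^ 2 * x6)) /
        (√(x1 ^ 2 + x3 ^ 2 + x5 ^ 2 + 2 * x1 * x3 * x5 - 1) *
          √(t ^ 2 + 2 * (x1 * x4) * t + x4 ^ 2)) := by
    funext t
    unfold phi
    ring_nf
  rw [hslice]
  apply deriv_linear_div_mul_sqrt_quadratic_pos
  · apply Real.sqrt_pos.mpr
    nlinarith [mul_pos (mul_pos h1 h3) h5]
  · nlinarith [mul_pos h2 h4]
  · have hfac : 0 < x4 * (x2 * x3 - x4 * x5) + x6 * (x2 + x1 * x4) := by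
      nlinarith [mul_nonneg h4.le (sub_nonneg.mpr h), mul_pos h6 h2,
        mul_pos (mul_pos h1 h4) h6]
    linarith [mul_pos hx1sq hfac]

theorem deriv_phi_x3_pos {x1 x2 x3 x4 x5 x6 : ℝ} (hx1 : 1 < x1) (h2 : 0 < x2) (h3 : 0 < x3)
    (h4 : 0 < x4) (h5 : 0 < x5) (h6 : 0 < x6) (h : x4 * x5 ≤ x2 * x3) :
    0 < deriv (fun t => phi x1 x2 t x4 x5 x6) x3 := by
  have h1 : 0 < x1 := by linarith
  have hx1sq : 0 < x1 ^ 2 - 1 := by nlinarith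
  have hslice : (fun t => phi x1 x2 t x4 x5 x6) = fun t =>
      ((x4 + x1 * x2) * t + (x2 * x5 + x1 * x4 * x5 + x6 - x1 ^ 2 * x6)) /
        (√(x2 ^ 2 + x4 ^ 2 + 2 * x1 * x2 * x4) *
          √(t ^ 2 + 2 * (x1 * x5) * t + (x1 ^ 2 + x5 ^ 2 - 1))) := by
    funext t
    unfold phi
    ring_nf
  rw [hslice]
  apply deriv_linear_div_mul_sqrt_quadratic_pos
  · apply Real.sqrt_pos.mpr
    positivity
  · nlinarith [mul_pos (mul_pos h1 h3) h5]
  · have hfac : 0 < x4 * (1 - x5 ^ 2) + x2 * (x1 + x3 * x5) + x6 * (x3 + x1 * x5) := by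
      nlinarith [mul_nonneg h5.le (sub_nonneg.mpr h), mul_pos h1 h2,
        mul_pos h3 h6, mul_pos (mul_pos h1 h5) h6]
    linarith [mul_pos hx1sq hfac]

theorem stmt_9 (x1 x2 x3 x4 x5 x6 : ℝ)
    (h2 : 0 < x2) (h3 : 0 < x3) (h4 : 0 < x4) (h5 : 0 < x5) (h6 : 0 < x6)
    (h1' : 1 < x1) :
    (0 < deriv (fun t => phi x1 t x3 x4 x5 x6) x2 ∧
     0 < deriv (fun t => phi x1 x2 t x4 x5 x6) x3) ∨
    (0 < deriv (fun t => phi x1 x2 x3 t x5 x6) x4 ∧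
     0 < deriv (fun t => phi x1 x2 x3 x4 t x6) x5) := by
  rcases le_total (x4 * x5) (x2 * x3) with h | h
  · exact Or.inl ⟨deriv_phi_x2_pos h1' h2 h3 h4 h5 h6 h, deriv_phi_x3_pos h1' h2 h3 h4 h5 h6 h⟩
  · simp only [phi_swap x1 x2 x3]
    exact Or.inr ⟨deriv_phi_x2_pos h1' h4 h5 h2 h3 h6 h, deriv_phi_x3_pos h1' h4 h5 h2 h3 h6 h⟩
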